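/- Assume C_2 > 0 and let L = lim_{n→∞} (1/n^d) · log C_n. Then for every n ≥ 1, (1/n^d) · (log C_{n+1} − q_d(n) · log |Σ|) ≤ L ≤ (1/n^d) · log C_n, where q_d(n) = (2^d − 1) · Σ_{k=0}^{d−1} (binom(d,k)/(2^d − 2^k)) · n^k. -/

import Mathlib

/-- A pattern `P` on the cube `[1,n]^d` (coordinates encoded by `Fin n`, where
`j : Fin n` represents the coordinate `j+1 ∈ [1,n]`) is locally admissible if no
two adjacent values form a forbidden pair. -/
def IsLocAdm {A : Type*} (d n : ℕ) (F : Fin d → Set (A × A))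
    (P : (Fin d → Fin n) → A) : Prop :=
  ∀ (x : Fin d → Fin n) (k : Fin d) (h : (x k : ℕ) + 1 < n),
    (P x, P (Function.update x k ⟨(x k : ℕ) + 1, h⟩)) ∉ F k

/-- `patCount d F n` is `C_n`, the number of locally admissible patterns on `[1,n]^d`. -/
noncomputable def patCount {A : Type*} [Fintype A] (d : ℕ) (F : Fin d → Set (A × A))
    (n : ℕ) : ℕ :=
  Nat.card {P : (Fin d → Fin n) → A // IsLocAdm d n F P}

/-- A configuration `x : ℤ^d → A` is globally admissible if no two adjacent values
form a forbidden pair. -/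
def IsGlobAdm {A : Type*} (d : ℕ) (F : Fin d → Set (A × A))
    (x : (Fin d → ℤ) → A) : Prop :=
  ∀ (v : Fin d → ℤ) (k : Fin d),
    (x v, x (Function.update v k (v k + 1))) ∉ F k

/-- The polynomial `q_d(m) = (2^d − 1) · Σ_{k=0}^{d−1} (binom(d,k)/(2^d − 2^k)) · m^k`,
as a real function. -/
noncomputable def qReal (d : ℕ) (m : ℝ) : ℝ :=
  (2 ^ d - 1) * ∑ k ∈ Finset.range d, (d.choose k : ℝ) / (2 ^ d - 2 ^ k) * m ^ k

/-!
Upper bound: an admissible pattern on `[1,nm]^d` restricts to `m^d` admissible patterns on the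
translates of `[1,n]^d` that tile it, so `C_{nm} ≤ C_n^{m^d}`; let `m → ∞`.

Lower bound: reflection. Cut a box with `s_i = a + 1` at its last layer `x_i = a`. Two admissible
patterns that agree on that layer glue, the second one mirrored, into an admissible pattern on the
box with `s_i = 2a + 1`; the mirror image is admissible because the forbidden pairs are symmetric.
Grouping patterns by their values on the layer, Cauchy–Schwarz gives `C(s)^2 ≤ |Σ|^|layer| C(s')`,
i.e. `log C(s) - |s| log |Σ|` at least doubles. Doubling in all `d` directions takes the cube of
side `N + 1` to the cube of side `2N + 1`; iterating from `N = n` and passing to the limit gives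
`log C_{n+1} ≤ n^d L + ((n+1)^d - n^d) log |Σ|`, and `(n+1)^d - n^d ≤ q_d(n)` coefficientwise.

All `C(s)` are positive because folding `ℕ^d` onto `{0,1}^d` mod 2 turns an admissible pattern on
the cube of side 2 into one on any box.
-/

open Filter Topology Function

theorem card_sq_le_card_mul_card_fiberProduct {Y Z : Type*} [Finite Y] [Finite Z] (φ : Y → Z) :
    Nat.card Y ^ 2 ≤ Nat.card Z * Nat.card {p : Y × Y // φ p.1 = φ p.2} := by
  have := Fintype.ofFinite Z
  let e : {p : Y × Y // φ p.1 = φ p.2} ≃ Σ z : Z, {y // φ y = z} × {y // φ y = z} :=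
    { toFun p := ⟨φ p.1.1, ⟨p.1.1, rfl⟩, ⟨p.1.2, p.2.symm⟩⟩
      invFun q := ⟨(q.2.1, q.2.2), q.2.1.2.trans q.2.2.2.symm⟩
      left_inv _ := rfl
      right_inv := by rintro ⟨_, ⟨y, rfl⟩, _⟩; rfl }
  have hY : Nat.card Y = ∑ z, Nat.card {y // φ y = z} := by
    rw [← Nat.card_sigma]; exact Nat.card_congr (Equiv.sigmaFiberEquiv φ).symm
  have hpairs : Nat.card {p : Y × Y // φ p.1 = φ p.2} = ∑ z, Nat.card {y // φ y = z} ^ 2 := by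
    simp only [Nat.card_congr e, Nat.card_sigma, Nat.card_prod, sq]
  rw [hY, hpairs, Nat.card_eq_fintype_card, ← Finset.card_univ]
  exact sq_sum_le_card_mul_sum_sq

theorem Real.log_natCast_le_add_of_le_mul {a b c : ℕ} (ha : 0 < a) (h : a ≤ b * c) :
    Real.log a ≤ Real.log b + Real.log c := by
  have hbc : 0 < b * c := ha.trans_le h
  have hb : 0 < b := pos_of_mul_pos_left hbc c.zero_le
  have hc : 0 < c := pos_of_mul_pos_right hbc b.zero_le
  rw [← Real.log_mul (by positivity) (by positivity)]
  exact Real.log_le_log (by positivity) (by exact_mod_cast h)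

section Patterns

variable {d : ℕ}

abbrev LatticeBox (s : Fin d → ℕ) : Type := {x : Fin d → ℕ // ∀ j, x j < s j}

def LatticeBox.equivPi (s : Fin d → ℕ) : LatticeBox s ≃ ((j : Fin d) → Fin (s j)) where
  toFun x j := ⟨x.1 j, x.2 j⟩
  invFun y := ⟨fun j => y j, fun j => (y j).2⟩

instance (s : Fin d → ℕ) : Finite (LatticeBox s) := .of_equiv _ (LatticeBox.equivPi s).symm

theorem LatticeBox.card (s : Fin d → ℕ) : Nat.card (LatticeBox s) = ∏ j, s j := by
  simp [Nat.card_congr (LatticeBox.equivPi s)]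

def step (k : Fin d) (x : Fin d → ℕ) : Fin d → ℕ := update x k (x k + 1)

variable {A : Type*} (F : Fin d → Set (A × A))

def IsBoxAdm (s : Fin d → ℕ) (P : LatticeBox s → A) : Prop :=
  ∀ (x y : LatticeBox s) (k : Fin d), y.1 = step k x.1 → (P x, P y) ∉ F k

noncomputable def boxCount (s : Fin d → ℕ) : ℕ :=
  Nat.card {P : LatticeBox s → A // IsBoxAdm F s P}

theorem boxCount_const [Fintype A] (n : ℕ) : boxCount F (fun _ => n) = patCount d F n := by
  let e := LatticeBox.equivPi (fun _ : Fin d => n)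
  refine Nat.card_congr ((e.arrowCongr (Equiv.refl A)).subtypeEquiv fun P => ?_)
  have hval (x : Fin d → Fin n) (k : Fin d) (h : (x k : ℕ) + 1 < n) :
      (e.symm (update x k ⟨x k + 1, h⟩)).1 = step k (e.symm x).1 :=
    comp_update Fin.val x k _
  constructor
  · intro hP x k h
    exact hP _ _ k (hval x k h)
  · intro hP x y k hy
    have h : x.1 k + 1 < n := by simpa [hy, step] using y.2 k
    have hy' : e.symm (update (e x) k ⟨(e x k : ℕ) + 1, h⟩) = y :=
      Subtype.ext ((hval (e x) k h).trans hy.symm)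
    simpa [hy'] using hP (e x) k h

def LatticeBox.tile {t m : Fin d → ℕ} (b : LatticeBox m) (r : LatticeBox t) : LatticeBox (t * m) :=
  ⟨fun j => b.1 j * t j + r.1 j, fun j => calc
    b.1 j * t j + r.1 j < (b.1 j + 1) * t j := by linarith [r.2 j]
    _ ≤ t j * m j := by rw [mul_comm (t j)]; exact Nat.mul_le_mul_right _ (b.2 j)⟩

theorem LatticeBox.tile_surjective {t m : Fin d → ℕ} (x : LatticeBox (t * m)) :
    ∃ b r, LatticeBox.tile b r = x := by
  have ht (j : Fin d) : 0 < t j := Nat.pos_of_ne_zero fun h => by simpa [h] using x.2 j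
  refine ⟨⟨fun j => x.1 j / t j, fun j => ?_⟩, ⟨fun j => x.1 j % t j, fun j => Nat.mod_lt _ (ht j)⟩,
    Subtype.ext (funext fun j => Nat.div_add_mod' (x.1 j) (t j))⟩
  rw [Nat.div_lt_iff_lt_mul (ht j), mul_comm (m j)]
  exact x.2 j

theorem step_tile {t m : Fin d → ℕ} (b : LatticeBox m) (r : LatticeBox t) (k : Fin d) :
    step k (LatticeBox.tile b r).1 = fun j => b.1 j * t j + step k r.1 j := by
  funext j
  rcases eq_or_ne j k with rfl | hj
  · simp [step, LatticeBox.tile, add_assoc]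
  · simp [step, LatticeBox.tile, update_of_ne hj]

theorem boxCount_mul_le [Finite A] (t m : Fin d → ℕ) :
    boxCount F (t * m) ≤ boxCount F t ^ ∏ j, m j := by
  let restrict (P : {P : LatticeBox (t * m) → A // IsBoxAdm F _ P}) (b : LatticeBox m) :
      {Q : LatticeBox t → A // IsBoxAdm F t Q} :=
    ⟨fun r => P.1 (b.tile r), fun x y k hy =>
      P.2 _ _ k (by rw [step_tile, ← hy]; rfl)⟩
  have hinj : Injective restrict := by
    intro P P' h
    refine Subtype.ext (funext fun x => ?_)
    obtain ⟨b, r, rfl⟩ := LatticeBox.tile_surjective x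
    exact congrArg (fun Q => Q.1 r) (congrFun h b)
  have := Nat.card_le_card_of_injective restrict hinj
  rwa [Nat.card_fun, LatticeBox.card] at this

theorem step_mod_two (k : Fin d) (x : Fin d → ℕ) :
    (fun j => step k x j % 2) = step k (fun j => x j % 2) ∨
      (fun j => x j % 2) = step k (fun j => step k x j % 2) := by
  rcases Nat.mod_two_eq_zero_or_one (x k) with h | h
  · left
    funext j
    rcases eq_or_ne j k with rfl | hj
    · simp only [step, update_self]; omega
    · simp [step, update_of_ne hj]
  · right
    funext j
    rcases eq_or_ne j k with rfl | hj
    · simp only [step, update_self]; omega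
    · simp [step, update_of_ne hj]

theorem boxCount_pos [Finite A] (hF : ∀ (i : Fin d) (a b : A), (a, b) ∈ F i ↔ (b, a) ∈ F i)
    (h2 : 0 < boxCount F (fun _ => 2)) (s : Fin d → ℕ) : 0 < boxCount F s := by
  obtain ⟨⟨P, hP⟩⟩ := (Nat.card_pos_iff.mp h2).1
  let fold (x : LatticeBox s) : LatticeBox (fun _ : Fin d => 2) :=
    ⟨fun j => x.1 j % 2, fun j => Nat.mod_lt _ two_pos⟩
  refine Nat.card_pos_iff.mpr ⟨⟨⟨P ∘ fold, fun x y k hy => ?_⟩⟩, inferInstance⟩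
  rcases step_mod_two k x.1 with h | h
  · exact hP (fold x) (fold y) k (by simp only [fold, hy, h])
  · exact fun hxy => hP (fold y) (fold x) k (by simp only [fold, hy, h]) ((hF k _ _).mp hxy)

section Reflection

variable {s : Fin d → ℕ} {i : Fin d} {a : ℕ}

def reflect (i : Fin d) (a : ℕ) (x : Fin d → ℕ) : Fin d → ℕ := update x i (2 * a - x i)

theorem reflect_reflect {x : Fin d → ℕ} (h : x i ≤ 2 * a) : reflect i a (reflect i a x) = x := by
  simp only [reflect, update_idem, update_self]
  rw [Nat.sub_sub_self h, update_eq_self]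

theorem reflect_step_of_ne {k : Fin d} (hk : k ≠ i) (x : Fin d → ℕ) :
    reflect i a (step k x) = step k (reflect i a x) := by
  simp only [reflect, step, update_of_ne hk.symm, update_of_ne hk, update_comm hk]

theorem step_reflect_step {x : Fin d → ℕ} (h : x i < 2 * a) :
    step i (reflect i a (step i x)) = reflect i a x := by
  simp only [reflect, step, update_idem, update_self]
  congr 1
  omega

theorem update_lt_update {x : Fin d → ℕ} {b c : ℕ} (hx : ∀ j, x j < update s i b j) {v : ℕ}
    (hv : v < c) : ∀ j, update x i v j < update s i c j :=
  (forall_update_iff s fun j w => update x i v j < w).mpr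
    ⟨by simpa using hv, fun j hj => by simpa [update_of_ne hj] using hx j⟩

theorem lt_update_of_lt_update {x : Fin d → ℕ} {b c : ℕ} (hx : ∀ j, x j < update s i b j)
    (hc : x i < c) : ∀ j, x j < update s i c j := by
  simpa using update_lt_update hx hc

theorem LatticeBox.apply_lt {b : ℕ} (x : LatticeBox (update s i b)) : x.1 i < b := by
  simpa using x.2 i

variable (P Q : LatticeBox (update s i (a + 1)) → A)

def topLayer (z : LatticeBox (update s i 1)) : A :=
  P ⟨update z.1 i a, update_lt_update z.2 (Nat.lt_succ_self a)⟩

theorem eq_of_topLayer_eq (h : topLayer P = topLayer Q) (x : LatticeBox (update s i (a + 1)))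
    (hx : x.1 i = a) : P x = Q x := by
  have hz := congrFun h ⟨update x.1 i 0, update_lt_update x.2 Nat.one_pos⟩
  have hx' : update (update x.1 i 0) i a = x.1 := by rw [update_idem, update_eq_self_iff, hx]
  simpa only [topLayer, hx'] using hz

def glue (x : LatticeBox (update s i (2 * a + 1))) : A :=
  if h : x.1 i ≤ a then P ⟨x.1, lt_update_of_lt_update x.2 (Nat.lt_succ_of_le h)⟩
  else Q ⟨reflect i a x.1, update_lt_update x.2 (by omega)⟩

theorem glue_of_le (x : LatticeBox (update s i (a + 1))) :
    glue P Q ⟨x.1, lt_update_of_lt_update x.2 (by have := x.apply_lt; omega)⟩ = P x := by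
  have : x.1 i ≤ a := Nat.le_of_lt_succ x.apply_lt
  simp [glue, this]

variable {P Q}

theorem glue_of_ge (hPQ : ∀ x : LatticeBox (update s i (a + 1)), x.1 i = a → P x = Q x)
    (x : LatticeBox (update s i (2 * a + 1))) (hx : a ≤ x.1 i) :
    glue P Q x = Q ⟨reflect i a x.1, update_lt_update x.2 (by omega)⟩ := by
  unfold glue
  split_ifs with h
  · have hxa : x.1 i = a := le_antisymm h hx
    rw [hPQ _ hxa]
    congr 2
    rw [reflect, eq_comm, update_eq_self_iff, hxa]; omega
  · rfl

theorem glue_reflect (hPQ : ∀ x : LatticeBox (update s i (a + 1)), x.1 i = a → P x = Q x)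
    (x : LatticeBox (update s i (a + 1))) :
    glue P Q ⟨reflect i a x.1, update_lt_update x.2 (by have := x.apply_lt; omega)⟩
      = Q x := by
  have hxi := x.apply_lt
  rw [glue_of_ge hPQ _ (by simp only [reflect, update_self]; omega)]
  congr 1
  exact Subtype.ext (reflect_reflect (by omega))

theorem isBoxAdm_glue (hF : ∀ (i : Fin d) (a b : A), (a, b) ∈ F i ↔ (b, a) ∈ F i)
    (hP : IsBoxAdm F _ P) (hQ : IsBoxAdm F _ Q)
    (hPQ : ∀ x : LatticeBox (update s i (a + 1)), x.1 i = a → P x = Q x) :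
    IsBoxAdm F _ (glue P Q) := by
  intro x y k hy
  have hyi : y.1 i = x.1 i ∨ y.1 i = x.1 i + 1 := by
    rcases eq_or_ne k i with rfl | hk
    · simp [hy, step]
    · simp [hy, step, update_of_ne hk.symm]
  by_cases hya : y.1 i ≤ a
  · have hxa : x.1 i ≤ a := by omega
    simp only [glue, dif_pos hxa, dif_pos hya]
    exact hP _ _ k hy
  · rw [glue_of_ge hPQ x (by omega), glue_of_ge hPQ y (by omega)]
    rcases eq_or_ne k i with rfl | hk
    · have hx2 : x.1 k < 2 * a := by
        have := y.2 k
        simp only [hy, step, update_self] at this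
        omega
      exact fun hxy => hQ _ _ k (by simp only [hy, step_reflect_step hx2]) ((hF k _ _).mp hxy)
    · exact hQ _ _ k (by simp only [hy, reflect_step_of_ne hk])

end Reflection

theorem boxCount_sq_le [Finite A] (hF : ∀ (i : Fin d) (a b : A), (a, b) ∈ F i ↔ (b, a) ∈ F i)
    (s : Fin d → ℕ) (i : Fin d) (a : ℕ) :
    boxCount F (update s i (a + 1)) ^ 2 ≤
      Nat.card (LatticeBox (update s i 1) → A) * boxCount F (update s i (2 * a + 1)) := by
  let Y := {P : LatticeBox (update s i (a + 1)) → A // IsBoxAdm F _ P}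
  let G (pq : {pq : Y × Y // topLayer pq.1.1 = topLayer pq.2.1}) :
      {R : LatticeBox (update s i (2 * a + 1)) → A // IsBoxAdm F _ R} :=
    ⟨glue pq.1.1.1 pq.1.2.1,
      isBoxAdm_glue F hF pq.1.1.2 pq.1.2.2 (eq_of_topLayer_eq _ _ pq.2)⟩
  have hG : Injective G := by
    rintro ⟨⟨P, Q⟩, hPQ⟩ ⟨⟨P', Q'⟩, hPQ'⟩ h
    have h' : glue P.1 Q.1 = glue P'.1 Q'.1 := congrArg Subtype.val h
    have hP : P = P' := Subtype.ext <| funext fun x => by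
      rw [← glue_of_le P.1 Q.1 x, ← glue_of_le P'.1 Q'.1 x, h']
    have hQ : Q = Q' := Subtype.ext <| funext fun x => by
      rw [← glue_reflect (eq_of_topLayer_eq _ _ hPQ) x,
        ← glue_reflect (eq_of_topLayer_eq _ _ hPQ') x, h']
    simp only [hP, hQ]
  calc _ ≤ _ := card_sq_le_card_mul_card_fiberProduct fun P : Y => topLayer P.1
    _ ≤ _ := Nat.mul_le_mul_left _ (Nat.card_le_card_of_injective G hG)

noncomputable def logDensity (s : Fin d → ℕ) : ℝ :=
  Real.log (boxCount F s) - (∏ j, s j : ℕ) * Real.log (Nat.card A)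

theorem two_mul_logDensity_le [Finite A]
    (hF : ∀ (i : Fin d) (a b : A), (a, b) ∈ F i ↔ (b, a) ∈ F i) {s : Fin d → ℕ} {i : Fin d}
    {a : ℕ} (hpos : 0 < boxCount F (update s i (a + 1))) :
    2 * logDensity F (update s i (a + 1)) ≤ logDensity F (update s i (2 * a + 1)) := by
  have hvol (b : ℕ) : ∏ j, update s i b j = b * ∏ j ∈ Finset.univ \ {i}, s j :=
    Finset.prod_update_of_mem (Finset.mem_univ i) _ _
  have h := Real.log_natCast_le_add_of_le_mul (pow_pos hpos 2) (boxCount_sq_le F hF s i a)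
  rw [Nat.card_fun, LatticeBox.card, Nat.cast_pow, Real.log_pow, Nat.cast_pow, Real.log_pow,
    hvol] at h
  simp only [logDensity, hvol]
  push_cast at h ⊢
  linarith

theorem two_pow_mul_logDensity_le [Finite A]
    (hF : ∀ (i : Fin d) (a b : A), (a, b) ∈ F i ↔ (b, a) ∈ F i)
    (hpos : ∀ s, 0 < boxCount F s) (N : ℕ) :
    2 ^ d * logDensity F (fun _ => N + 1) ≤ logDensity F (fun _ => 2 * N + 1) := by
  classical
  let box (T : Finset (Fin d)) : Fin d → ℕ := fun j => if j ∈ T then 2 * N + 1 else N + 1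
  have key (T : Finset (Fin d)) : 2 ^ T.card * logDensity F (box ∅) ≤ logDensity F (box T) := by
    induction T using Finset.induction_on with
    | empty => simp
    | insert i T hi ih =>
      have h1 : update (box T) i (N + 1) = box T := by simp [box, hi]
      have h2 : update (box T) i (2 * N + 1) = box (insert i T) := by
        funext j
        rcases eq_or_ne j i with rfl | hj <;> simp [box, *]
      have hstep := two_mul_logDensity_le F hF (s := box T) (i := i) (a := N) (hpos _)
      rw [h1, h2] at hstep
      rw [Finset.card_insert_of_notMem hi, pow_succ, mul_comm _ 2, mul_assoc]
      linarith
  simpa [box] using key Finset.univ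

theorem patCount_mul_le [Fintype A] (n m : ℕ) : patCount d F (n * m) ≤ patCount d F n ^ m ^ d := by
  have h := boxCount_mul_le F (fun _ : Fin d => n) (fun _ => m)
  change boxCount F (fun _ => n * m) ≤ _ at h
  simpa only [boxCount_const, Finset.prod_const, Finset.card_univ, Fintype.card_fin] using h

theorem logDensity_const [Fintype A] (n : ℕ) :
    logDensity F (fun _ : Fin d => n) =
      Real.log (patCount d F n) - (n : ℝ) ^ d * Real.log (Fintype.card A) := by
  simp [logDensity, boxCount_const]

end Patterns

section Asymptotics

variable {u : ℕ → ℝ} {d n : ℕ} {ℓ : ℝ}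

theorem le_div_pow_of_le_pow_mul (hn : 1 ≤ n) (hmul : ∀ m, u (n * m) ≤ m ^ d * u n)
    (hlim : Tendsto (fun m : ℕ => u m / (m : ℝ) ^ d) atTop (𝓝 ℓ)) : ℓ ≤ u n / n ^ d := by
  refine le_of_tendsto (hlim.comp (tendsto_id.const_mul_atTop' hn))
    (eventually_atTop.mpr ⟨1, fun m hm => ?_⟩)
  have hm : (0 : ℝ) < m := by exact_mod_cast hm
  have hn : (0 : ℝ) < n := by exact_mod_cast hn
  simp only [comp_apply, id, Nat.cast_mul, mul_pow]
  rw [div_le_div_iff₀ (by positivity) (by positivity)]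
  calc u (n * m) * n ^ d ≤ m ^ d * u n * n ^ d := by gcongr; exact hmul m
    _ = u n * (n ^ d * m ^ d) := by ring

theorem le_pow_mul_of_two_pow_mul_le (hn : 1 ≤ n)
    (hdouble : ∀ N, 2 ^ d * u (N + 1) ≤ u (2 * N + 1))
    (hlim : Tendsto (fun m : ℕ => u m / (m : ℝ) ^ d) atTop (𝓝 ℓ)) : u (n + 1) ≤ n ^ d * ℓ := by
  have iter (t : ℕ) : u (n + 1) ≤ u (2 ^ t * n + 1) / (2 ^ t) ^ d := by
    induction t with
    | zero => simp
    | succ t ih =>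
      calc u (n + 1) ≤ u (2 ^ t * n + 1) / (2 ^ t) ^ d := ih
        _ = 2 ^ d * u (2 ^ t * n + 1) / (2 ^ (t + 1)) ^ d := by
          rw [pow_succ, mul_pow]; field_simp
        _ ≤ u (2 * (2 ^ t * n) + 1) / (2 ^ (t + 1)) ^ d := by gcongr; exact hdouble _
        _ = u (2 ^ (t + 1) * n + 1) / (2 ^ (t + 1)) ^ d := by rw [← mul_assoc, ← pow_succ']
  have hm : Tendsto (fun t : ℕ => 2 ^ t * n + 1) atTop atTop :=
    tendsto_atTop_mono (fun _ => (Nat.lt_two_pow_self.le.trans (Nat.le_mul_of_pos_right _ hn)).trans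
      (Nat.le_succ _)) tendsto_id
  have hratio : Tendsto (fun t : ℕ => ((2 ^ t * n + 1 : ℕ) : ℝ) / 2 ^ t) atTop (𝓝 n) := by
    have h := (tendsto_pow_atTop_nhds_zero_of_lt_one (r := (2⁻¹ : ℝ)) (by norm_num)
      (by norm_num)).const_add (n : ℝ)
    rw [add_zero] at h
    refine h.congr fun t => ?_
    rw [eq_div_iff (by positivity), add_mul, inv_pow, inv_mul_cancel₀ (by positivity)]
    push_cast
    ring
  have hlim' := (hratio.pow d).mul (hlim.comp hm)
  refine ge_of_tendsto (hlim'.congr fun t => ?_) (Eventually.of_forall iter)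
  have : ((2 ^ t * n + 1 : ℕ) : ℝ) ≠ 0 := by positivity
  simp only [comp_apply, div_pow]
  field_simp

end Asymptotics

theorem add_one_pow_sub_pow_le_qReal {x : ℝ} (hx : 0 ≤ x) (d : ℕ) :
    (x + 1) ^ d - x ^ d ≤ qReal d x := by
  have hexp : (x + 1) ^ d - x ^ d = ∑ k ∈ Finset.range d, (d.choose k : ℝ) * x ^ k := by
    rw [add_pow, Finset.sum_range_succ]
    simp [mul_comm]
  rw [hexp, qReal, Finset.mul_sum]
  refine Finset.sum_le_sum fun k hk => ?_
  have hk : (2 : ℝ) ^ k < 2 ^ d := pow_lt_pow_right₀ one_lt_two (Finset.mem_range.mp hk)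
  have hfrac : 1 ≤ (2 ^ d - 1) / (2 ^ d - 2 ^ k : ℝ) :=
    (one_le_div (by linarith)).mpr (by linarith [one_le_pow₀ (one_le_two : (1 : ℝ) ≤ 2) (n := k)])
  calc (d.choose k : ℝ) * x ^ k ≤ d.choose k * x ^ k * ((2 ^ d - 1) / (2 ^ d - 2 ^ k)) :=
        le_mul_of_one_le_right (by positivity) hfrac
    _ = _ := by ring

section Entropy

variable {A : Type*} [Fintype A] {d : ℕ} {F : Fin d → Set (A × A)}

theorem boxCount_pos_of_patCount_two_pos
    (hF : ∀ (i : Fin d) (a b : A), (a, b) ∈ F i ↔ (b, a) ∈ F i) (h2 : 0 < patCount d F 2)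
    (s : Fin d → ℕ) : 0 < boxCount F s :=
  boxCount_pos F hF (by rwa [boxCount_const]) s

theorem log_patCount_mul_le (hF : ∀ (i : Fin d) (a b : A), (a, b) ∈ F i ↔ (b, a) ∈ F i)
    (h2 : 0 < patCount d F 2) (n m : ℕ) :
    Real.log (patCount d F (n * m)) ≤ (m : ℝ) ^ d * Real.log (patCount d F n) := by
  have hpos := boxCount_const F (n * m) ▸ boxCount_pos_of_patCount_two_pos hF h2 fun _ => n * m
  calc Real.log (patCount d F (n * m)) ≤ Real.log ((patCount d F n ^ m ^ d : ℕ) : ℝ) :=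
        Real.log_le_log (by exact_mod_cast hpos) (by exact_mod_cast patCount_mul_le F n m)
    _ = (m : ℝ) ^ d * Real.log (patCount d F n) := by rw [Nat.cast_pow, Real.log_pow, Nat.cast_pow]

theorem log_patCount_succ_le (hF : ∀ (i : Fin d) (a b : A), (a, b) ∈ F i ↔ (b, a) ∈ F i)
    (h2 : 0 < patCount d F 2) {L : ℝ}
    (hL : Tendsto (fun m : ℕ => Real.log (patCount d F m) / (m : ℝ) ^ d) atTop (𝓝 L))
    {n : ℕ} (hn : 1 ≤ n) :
    Real.log (patCount d F (n + 1)) ≤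
      (n : ℝ) ^ d * L + (((n : ℝ) + 1) ^ d - (n : ℝ) ^ d) * Real.log (Fintype.card A) := by
  have hlim : Tendsto (fun m : ℕ => logDensity F (fun _ : Fin d => m) / (m : ℝ) ^ d) atTop
      (𝓝 (L - Real.log (Fintype.card A))) := by
    refine (hL.sub_const _).congr' (eventually_atTop.mpr ⟨1, fun m hm => ?_⟩)
    have : (0 : ℝ) < (m : ℝ) ^ d := by positivity
    beta_reduce
    rw [logDensity_const, sub_div, mul_div_cancel_left₀ _ this.ne']
  have h := le_pow_mul_of_two_pow_mul_le hn
    (two_pow_mul_logDensity_le F hF (boxCount_pos_of_patCount_two_pos hF h2)) hlim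
  rw [logDensity_const] at h
  push_cast at h
  linarith

end Entropy

open Filter in
theorem entropy_two_sided_bounds_general
    {A : Type*} [Fintype A]
    (d : ℕ) (F : Fin d → Set (A × A))
    (hF : ∀ (i : Fin d) (a b : A), (a, b) ∈ F i ↔ (b, a) ∈ F i)
    (h2 : 0 < patCount d F 2) (L : ℝ)
    (hL : Tendsto (fun n : ℕ => (1 / (n : ℝ) ^ d) * Real.log (patCount d F n)) atTop
      (nhds L)) :
    ∀ n : ℕ, 1 ≤ n →
      (1 / (n : ℝ) ^ d) *
          (Real.log (patCount d F (n + 1)) - qReal d n * Real.log (Fintype.card A)) ≤ L ∧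
        L ≤ (1 / (n : ℝ) ^ d) * Real.log (patCount d F n) := by
  intro n hn
  have hlim : Tendsto (fun m : ℕ => Real.log (patCount d F m) / (m : ℝ) ^ d) atTop (𝓝 L) := by
    simpa only [one_div_mul_eq_div] using hL
  have hq := mul_le_mul_of_nonneg_right (add_one_pow_sub_pow_le_qReal (Nat.cast_nonneg n) d)
    (Real.log_natCast_nonneg (Fintype.card A))
  simp only [one_div_mul_eq_div]
  constructor
  · rw [div_le_iff₀ (by positivity)]
    linarith [log_patCount_succ_le hF h2 hlim hn]
  · exact le_div_pow_of_le_pow_mul hn (log_patCount_mul_le hF h2 n) hlim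

open Filter in
/-- main theorem: if `C_2 > 0` and `L = lim (1/n^d) log C_n`, then for every
`n ≥ 1`, `(1/n^d)(log C_{n+1} − q_d(n) log |Σ|) ≤ L ≤ (1/n^d) log C_n`. -/
theorem entropy_two_sided_bounds
    {A : Type*} [Fintype A] [Nonempty A]
    (d : ℕ) (hd : 1 ≤ d) (F : Fin d → Set (A × A))
    (hF : ∀ (i : Fin d) (a b : A), (a, b) ∈ F i ↔ (b, a) ∈ F i)
    (h2 : 0 < patCount d F 2) (L : ℝ)
    (hL : Tendsto (fun n : ℕ => (1 / (n : ℝ) ^ d) * Real.log (patCount d F n)) atTop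
      (nhds L)) :
    ∀ n : ℕ, 1 ≤ n →
      (1 / (n : ℝ) ^ d) *
          (Real.log (patCount d F (n + 1)) - qReal d n * Real.log (Fintype.card A)) ≤ L ∧
        L ≤ (1 / (n : ℝ) ^ d) * Real.log (patCount d F n) :=
  entropy_two_sided_bounds_general d F hF h2 L hL
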